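/- Let 𝔍 be the blind polychromatic ptychography objective with ε, α_T, β_T > 0, and let (z^{t,i}), (w^{t,j}) be generated by the alternating amplitude-flow updates z^{t,i} = z^{t,i−1} − μ_{t,i} ∇_z 𝔍(z^{t,i−1}, w^{t−1}) and w^{t,j} = w^{t,j−1} − ν_{t,j} ∇_w 𝔍(z^t, w^{t,j−1}) from arbitrary (z^0, w^0), where each step size satisfies the descent inequality of its subiteration (as guaranteed by AGA) together with 1/B(w^{t−1}) ≤ μ_{t,i} ≤ τ^{−N}/B(w^{t−1}) and 1/B(z^t) ≤ ν_{t,j} ≤ τ^{−N}/B(z^t). Then the full Wirtinger gradient of 𝔍 vanishes along the iterates: ‖∇𝔍(z^t, w^t)‖₂² = ‖∇_z 𝔍(z^t, w^t)‖₂² + ‖∇_w 𝔍(z^t, w^t)‖₂² → 0 as t → ∞. -/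

import Mathlib

open Matrix
open scoped ComplexOrder
open Matrix
open scoped ComplexOrder

/-- Spectral (operator 2-) norm of a square complex matrix. -/
noncomputable def specNorm {n : Type*} [Fintype n] [DecidableEq n] (A : Matrix n n ℂ) : ℝ :=
  ‖Matrix.toEuclideanCLM (𝕜 := ℂ) A‖

/-- Spectral (operator 2-) norm of a square real matrix. -/
noncomputable def specNormR {n : Type*} [Fintype n] [DecidableEq n] (A : Matrix n n ℝ) : ℝ :=
  ‖Matrix.toEuclideanCLM (𝕜 := ℝ) A‖

/-- Extension of a vector `v ∈ ℂ^{[d]²}` to `ℤ²` by zero: this realizes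
`v_p · 𝟙_Q(p/d)`, where `𝟙_Q(p/d) = 1` iff `p ∈ [d]²`. -/
noncomputable def extz (d : ℕ) (v : Fin d × Fin d → ℂ) (p : ℤ × ℤ) : ℂ :=
  if h : 0 ≤ p.1 ∧ p.1 < (d : ℤ) ∧ 0 ≤ p.2 ∧ p.2 < (d : ℤ) then
    v (⟨p.1.toNat, by omega⟩, ⟨p.2.toNat, by omega⟩)
  else 0

/-- The vector `a^ℓ_{m,k} ∈ ℂ^{[d]²}` with entries
`(a^ℓ_{m,k})_n = conj((w_ℓ)_{n−m}) 𝟙_Q((n−m)/d) e^{2πi (λ₁/λ_ℓ) k·n/d}`. -/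
noncomputable def avec (d L : ℕ) (lam : Fin L → ℝ) (lam1 : ℝ)
    (w : Fin L → Fin d × Fin d → ℂ) (ℓ : Fin L) (m : ℤ × ℤ) (k : Fin d × Fin d) :
    Fin d × Fin d → ℂ := fun n =>
  (starRingEnd ℂ) (extz d (w ℓ) ((n.1 : ℤ) - m.1, (n.2 : ℤ) - m.2)) *
    Complex.exp (2 * Real.pi * Complex.I * (lam1 / lam ℓ : ℝ) *
      (((k.1 : ℕ) * (n.1 : ℕ) + (k.2 : ℕ) * (n.2 : ℕ) : ℕ)) / (d : ℕ))

/-- The block-diagonal measurement matrix `Q^w_{m,k} ∈ ℂ^{dL×dL}` with `ℓ`-th diagonal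
block `λ_ℓ^{−2} a^ℓ_{m,k} (a^ℓ_{m,k})^*`. -/
noncomputable def Qw (d L : ℕ) (lam : Fin L → ℝ) (lam1 : ℝ)
    (w : Fin L → Fin d × Fin d → ℂ) (m : ℤ × ℤ) (k : Fin d × Fin d) :
    Matrix (Fin L × (Fin d × Fin d)) (Fin L × (Fin d × Fin d)) ℂ :=
  Matrix.of fun p q =>
    if p.1 = q.1 then
      ((lam p.1 : ℂ) ^ 2)⁻¹ * avec d L lam lam1 w p.1 m k p.2 *
        (starRingEnd ℂ) (avec d L lam lam1 w p.1 m k q.2)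
    else 0

/-- The partial Fourier matrix `F_ℓ` with entries `(F_ℓ)_{k,n} = e^{−2πi (λ₁/λ_ℓ) k·n/d}`. -/
noncomputable def Fmat (d L : ℕ) (lam : Fin L → ℝ) (lam1 : ℝ) (ℓ : Fin L) :
    Matrix (Fin d × Fin d) (Fin d × Fin d) ℂ :=
  Matrix.of fun k n =>
    Complex.exp (-(2 * Real.pi * Complex.I) * (lam1 / lam ℓ : ℝ) *
      (((k.1 : ℕ) * (n.1 : ℕ) + (k.2 : ℕ) * (n.2 : ℕ) : ℕ)) / (d : ℕ))

/-- The tridiagonal matrix `K ∈ ℝ^{L×L}` of the smoothness penalty, 0-based indexing. -/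
def Kmat (L : ℕ) (κ : ℕ → ℝ) : Matrix (Fin L) (Fin L) ℝ :=
  Matrix.of fun j k =>
    if (j : ℕ) = (k : ℕ) then
      (if (k : ℕ) = 0 then 0 else κ (k : ℕ)) +
      (if (k : ℕ) = L - 1 then 0 else κ ((k : ℕ) + 1))
    else if (j : ℕ) = (k : ℕ) + 1 then -κ ((k : ℕ) + 1)
    else if (k : ℕ) = (j : ℕ) + 1 then -κ ((j : ℕ) + 1)
    else 0

/-- The smoothness penalty `S(v) = Σ_{ℓ=1}^{L−1} κ_ℓ ‖v_{ℓ+1} − v_ℓ‖₂²`. -/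
noncomputable def Spen (L : ℕ) {ι : Type*} [Fintype ι] (κ : ℕ → ℝ)
    (v : Fin L × ι → ℂ) : ℝ :=
  ∑ ℓ : Fin L,
    if h : (ℓ : ℕ) + 1 < L then
      κ ((ℓ : ℕ) + 1) * ∑ i : ι, ‖v (⟨(ℓ : ℕ) + 1, h⟩, i) - v (ℓ, i)‖ ^ 2
    else 0

/-- The blind polychromatic ptychography objective
`𝔍(z,w) = L_ε(z;w) + α_T‖z‖₂² + α_S S(z) + β_T‖w‖₂² + β_S S(w)`, where
`L_ε(z;w) = Σ_{m∈M,k∈[d]²} (√(z* Q^w_{m,k} z + ε) − √(y_{m,k}+ε))²`. -/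
noncomputable def BlindObj (d L : ℕ) (lam : Fin L → ℝ) (lam1 : ℝ)
    (M : Finset (ℤ × ℤ)) (y : ℤ × ℤ → Fin d × Fin d → ℝ)
    (ε αT αS βT βS : ℝ) (κ : ℕ → ℝ)
    (z w : Fin L × (Fin d × Fin d) → ℂ) : ℝ :=
  (∑ m ∈ M, ∑ k : Fin d × Fin d,
      (Real.sqrt ((star z ⬝ᵥ ((Qw d L lam lam1 (fun ℓ q => w (ℓ, q)) m k) *ᵥ z)).re + ε)
        - Real.sqrt (y m k + ε)) ^ 2)
    + αT * ∑ p, ‖z p‖ ^ 2 + αS * Spen L κ z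
    + βT * ∑ p, ‖w p‖ ^ 2 + βS * Spen L κ w

/-- The Hessian bound `B(w)` for the object step:
`B(w) = max_ℓ { λ_ℓ^{−2}‖F_ℓ‖² max_n Σ_{m∈M} |(w_ℓ)_{n−m}|²𝟙_Q((n−m)/d) } + α_T + α_S‖K‖`. -/
noncomputable def Bw (d L : ℕ) (hd : 0 < d) (hL : 0 < L) (lam : Fin L → ℝ) (lam1 : ℝ)
    (M : Finset (ℤ × ℤ)) (αT αS : ℝ) (κ : ℕ → ℝ)
    (w : Fin L × (Fin d × Fin d) → ℂ) : ℝ :=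
  Finset.univ.sup' ⟨⟨0, hL⟩, Finset.mem_univ _⟩
    (fun ℓ : Fin L =>
      ((lam ℓ) ^ 2)⁻¹ * specNorm (Fmat d L lam lam1 ℓ) ^ 2 *
        Finset.univ.sup' ⟨(⟨0, hd⟩, ⟨0, hd⟩), Finset.mem_univ _⟩
          (fun n : Fin d × Fin d =>
            ∑ m ∈ M, ‖extz d (fun q => w (ℓ, q)) ((n.1 : ℤ) - m.1, (n.2 : ℤ) - m.2)‖ ^ 2))
    + (αT + αS * specNormR (Kmat L κ))

/-- The Hessian bound `B(z)` for the window step: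
`B(z) = max_ℓ { λ_ℓ^{−2}‖F_ℓ‖² max_n Σ_{m∈M} |(z_ℓ)_{n+m}|²𝟙_Q((n+m)/d) } + β_T + β_S‖K‖`. -/
noncomputable def Bz (d L : ℕ) (hd : 0 < d) (hL : 0 < L) (lam : Fin L → ℝ) (lam1 : ℝ)
    (M : Finset (ℤ × ℤ)) (βT βS : ℝ) (κ : ℕ → ℝ)
    (z : Fin L × (Fin d × Fin d) → ℂ) : ℝ :=
  Finset.univ.sup' ⟨⟨0, hL⟩, Finset.mem_univ _⟩
    (fun ℓ : Fin L =>
      ((lam ℓ) ^ 2)⁻¹ * specNorm (Fmat d L lam lam1 ℓ) ^ 2 *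
        Finset.univ.sup' ⟨(⟨0, hd⟩, ⟨0, hd⟩), Finset.mem_univ _⟩
          (fun n : Fin d × Fin d =>
            ∑ m ∈ M, ‖extz d (fun q => z (ℓ, q)) ((n.1 : ℤ) + m.1, (n.2 : ℤ) + m.2)‖ ^ 2))
    + (βT + βS * specNormR (Kmat L κ))


section Aux
variable {d L : ℕ}

lemma extz_cd {n : ℕ∞} (d : ℕ) (p : ℤ × ℤ) :
    ContDiff ℝ n fun v : Fin d × Fin d → ℂ => extz d v p := by
  by_cases h : 0 ≤ p.1 ∧ p.1 < (d : ℤ) ∧ 0 ≤ p.2 ∧ p.2 < (d : ℤ)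
  · simp only [extz, dif_pos h]
    exact contDiff_apply _ _ _
  · simp only [extz, dif_neg h]
    exact contDiff_const

lemma quad_eq (d L : ℕ) (lam : Fin L → ℝ) (lam1 : ℝ) (w : Fin L → Fin d × Fin d → ℂ)
    (m : ℤ × ℤ) (k : Fin d × Fin d) (z : Fin L × (Fin d × Fin d) → ℂ) :
    star z ⬝ᵥ (Qw d L lam lam1 w m k *ᵥ z)
      = ∑ ℓ : Fin L, (((lam ℓ : ℂ)) ^ 2)⁻¹ *
          (Complex.normSq (∑ n, (starRingEnd ℂ) (avec d L lam lam1 w ℓ m k n) * z (ℓ, n)) : ℝ) := by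
  simp only [dotProduct, mulVec, Qw, Matrix.of_apply]
  rw [Fintype.sum_prod_type]
  refine Finset.sum_congr rfl fun ℓ _ => ?_
  have hinner : ∀ n : Fin d × Fin d,
      (∑ q : Fin L × (Fin d × Fin d),
        (if ℓ = q.1 then ((lam ℓ : ℂ) ^ 2)⁻¹ * avec d L lam lam1 w ℓ m k n *
            (starRingEnd ℂ) (avec d L lam lam1 w ℓ m k q.2) else 0) * z q)
      = ((lam ℓ : ℂ) ^ 2)⁻¹ * avec d L lam lam1 w ℓ m k n *
          ∑ n' : Fin d × Fin d, (starRingEnd ℂ) (avec d L lam lam1 w ℓ m k n') * z (ℓ, n') := by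
    intro n
    rw [Fintype.sum_prod_type, Finset.mul_sum]
    rw [Finset.sum_eq_single ℓ]
    · refine Finset.sum_congr rfl fun n' _ => ?_
      simp [mul_assoc]
    · intro b _ hb
      simp [Ne.symm hb]
    · simp
  calc (∑ n : Fin d × Fin d, star (z (ℓ, n)) *
        ∑ q : Fin L × (Fin d × Fin d),
          (if (ℓ, n).1 = q.1 then ((lam (ℓ, n).1 : ℂ) ^ 2)⁻¹ * avec d L lam lam1 w (ℓ, n).1 m k (ℓ, n).2 *
              (starRingEnd ℂ) (avec d L lam lam1 w (ℓ, n).1 m k q.2) else 0) * z q)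
      = ∑ n : Fin d × Fin d, star (z (ℓ, n)) * (((lam ℓ : ℂ) ^ 2)⁻¹ * avec d L lam lam1 w ℓ m k n *
          ∑ n' : Fin d × Fin d, (starRingEnd ℂ) (avec d L lam lam1 w ℓ m k n') * z (ℓ, n')) := by
        refine Finset.sum_congr rfl fun n _ => ?_
        rw [hinner n]
    _ = ((lam ℓ : ℂ) ^ 2)⁻¹ *
          ((∑ n, star (z (ℓ, n)) * avec d L lam lam1 w ℓ m k n) *
           (∑ n', (starRingEnd ℂ) (avec d L lam lam1 w ℓ m k n') * z (ℓ, n'))) := by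
        conv_rhs => rw [Finset.sum_mul]
        rw [Finset.mul_sum]
        refine Finset.sum_congr rfl fun n _ => ?_
        ring
    _ = (((lam ℓ : ℂ)) ^ 2)⁻¹ *
          (Complex.normSq (∑ n, (starRingEnd ℂ) (avec d L lam lam1 w ℓ m k n) * z (ℓ, n)) : ℝ) := by
        congr 1
        set T := ∑ n, (starRingEnd ℂ) (avec d L lam lam1 w ℓ m k n) * z (ℓ, n) with hT
        have : (∑ n, star (z (ℓ, n)) * avec d L lam lam1 w ℓ m k n) = (starRingEnd ℂ) T := by
          rw [hT, map_sum]
          refine Finset.sum_congr rfl fun n _ => ?_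
          simp [mul_comm, Complex.star_def]
        rw [this, Complex.normSq_eq_conj_mul_self]

end Aux

lemma quad_re (d L : ℕ) (lam : Fin L → ℝ) (lam1 : ℝ) (w : Fin L → Fin d × Fin d → ℂ)
    (m : ℤ × ℤ) (k : Fin d × Fin d) (z : Fin L × (Fin d × Fin d) → ℂ) :
    (star z ⬝ᵥ (Qw d L lam lam1 w m k *ᵥ z)).re
      = ∑ ℓ : Fin L, ((lam ℓ) ^ 2)⁻¹ *
          Complex.normSq (∑ n, (starRingEnd ℂ) (avec d L lam lam1 w ℓ m k n) * z (ℓ, n)) := by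
  rw [quad_eq]
  have : ∀ ℓ : Fin L, ((lam ℓ : ℂ) ^ 2)⁻¹ *
      (Complex.normSq (∑ n, (starRingEnd ℂ) (avec d L lam lam1 w ℓ m k n) * z (ℓ, n)) : ℝ)
      = ((((lam ℓ) ^ 2)⁻¹ *
          Complex.normSq (∑ n, (starRingEnd ℂ) (avec d L lam lam1 w ℓ m k n) * z (ℓ, n)) : ℝ) : ℂ) := by
    intro ℓ; push_cast; ring
  rw [Finset.sum_congr rfl fun ℓ _ => this ℓ, ← Complex.ofReal_sum, Complex.ofReal_re]

lemma quad_re_nonneg (d L : ℕ) (lam : Fin L → ℝ) (lam1 : ℝ) (w : Fin L → Fin d × Fin d → ℂ)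
    (m : ℤ × ℤ) (k : Fin d × Fin d) (z : Fin L × (Fin d × Fin d) → ℂ) :
    0 ≤ (star z ⬝ᵥ (Qw d L lam lam1 w m k *ᵥ z)).re := by
  rw [quad_re]
  apply Finset.sum_nonneg
  intro ℓ _
  exact mul_nonneg (inv_nonneg.2 (sq_nonneg _)) (Complex.normSq_nonneg _)

lemma Spen_nonneg (L : ℕ) {ι : Type*} [Fintype ι] (κ : ℕ → ℝ)
    (hκ : ∀ ℓ, 1 ≤ ℓ → ℓ ≤ L - 1 → 0 < κ ℓ) (v : Fin L × ι → ℂ) : 0 ≤ Spen L κ v := by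
  apply Finset.sum_nonneg
  intro ℓ _
  split
  · rename_i h
    apply mul_nonneg (le_of_lt (hκ _ (by omega) (by omega)))
    positivity
  · exact le_refl 0

lemma obj_nonneg (d L : ℕ) (lam : Fin L → ℝ) (lam1 : ℝ)
    (M : Finset (ℤ × ℤ)) (y : ℤ × ℤ → Fin d × Fin d → ℝ)
    (ε αT αS βT βS : ℝ) (hαT : 0 ≤ αT) (hαS : 0 ≤ αS) (hβT : 0 ≤ βT) (hβS : 0 ≤ βS)
    (κ : ℕ → ℝ) (hκ : ∀ ℓ, 1 ≤ ℓ → ℓ ≤ L - 1 → 0 < κ ℓ)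
    (z w : Fin L × (Fin d × Fin d) → ℂ) :
    0 ≤ BlindObj d L lam lam1 M y ε αT αS βT βS κ z w := by
  unfold BlindObj
  have h1 : (0:ℝ) ≤ ∑ m ∈ M, ∑ k : Fin d × Fin d,
      (Real.sqrt ((star z ⬝ᵥ ((Qw d L lam lam1 (fun ℓ q => w (ℓ, q)) m k) *ᵥ z)).re + ε)
        - Real.sqrt (y m k + ε)) ^ 2 := by positivity
  have h2 : (0:ℝ) ≤ αT * ∑ p, ‖z p‖ ^ 2 := by positivity
  have h3 : (0:ℝ) ≤ αS * Spen L κ z := mul_nonneg hαS (Spen_nonneg L κ hκ z)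
  have h4 : (0:ℝ) ≤ βT * ∑ p, ‖w p‖ ^ 2 := by positivity
  have h5 : (0:ℝ) ≤ βS * Spen L κ w := mul_nonneg hβS (Spen_nonneg L κ hκ w)
  linarith

lemma extz_sq_le (d : ℕ) (v : Fin d × Fin d → ℂ) (p : ℤ × ℤ) :
    ‖extz d v p‖ ^ 2 ≤ ∑ q, ‖v q‖ ^ 2 := by
  unfold extz
  split_ifs with h
  · exact Finset.single_le_sum (f := fun q => ‖v q‖ ^ 2) (fun q _ => by positivity)
      (Finset.mem_univ _)
  · simpa using Finset.sum_nonneg (f := fun q : Fin d × Fin d => ‖v q‖ ^ 2)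
      (fun q _ => by positivity)

lemma sum_coord_le (d L : ℕ) (w : Fin L × (Fin d × Fin d) → ℂ) (ℓ : Fin L) :
    ∑ q : Fin d × Fin d, ‖w (ℓ, q)‖ ^ 2 ≤ ∑ p, ‖w p‖ ^ 2 := by
  conv_rhs => rw [Fintype.sum_prod_type]
  exact Finset.single_le_sum (f := fun ℓ' => ∑ q : Fin d × Fin d, ‖w (ℓ', q)‖ ^ 2)
    (fun ℓ' _ => Finset.sum_nonneg fun q _ => by positivity) (Finset.mem_univ ℓ)

lemma Bw_ge (d L : ℕ) (hd : 0 < d) (hL : 0 < L) (lam : Fin L → ℝ) (lam1 : ℝ)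
    (M : Finset (ℤ × ℤ)) (αT αS : ℝ) (hαS : 0 ≤ αS) (κ : ℕ → ℝ)
    (w : Fin L × (Fin d × Fin d) → ℂ) :
    αT ≤ Bw d L hd hL lam lam1 M αT αS κ w := by
  unfold Bw
  have h1 : (0:ℝ) ≤ Finset.univ.sup' ⟨⟨0, hL⟩, Finset.mem_univ _⟩
      (fun ℓ : Fin L =>
        ((lam ℓ) ^ 2)⁻¹ * specNorm (Fmat d L lam lam1 ℓ) ^ 2 *
          Finset.univ.sup' ⟨(⟨0, hd⟩, ⟨0, hd⟩), Finset.mem_univ _⟩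
            (fun n : Fin d × Fin d =>
              ∑ m ∈ M, ‖extz d (fun q => w (ℓ, q)) ((n.1 : ℤ) - m.1, (n.2 : ℤ) - m.2)‖ ^ 2)) := by
    refine le_trans ?_ (Finset.le_sup' _ (Finset.mem_univ ⟨0, hL⟩))
    refine mul_nonneg (by positivity) ?_
    refine le_trans ?_ (Finset.le_sup' _ (Finset.mem_univ (⟨0, hd⟩, ⟨0, hd⟩)))
    exact Finset.sum_nonneg fun m _ => by positivity
  have h2 : (0:ℝ) ≤ αS * specNormR (Kmat L κ) :=
    mul_nonneg hαS (norm_nonneg _)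
  linarith

lemma Bw_le (d L : ℕ) (hd : 0 < d) (hL : 0 < L) (lam : Fin L → ℝ) (lam1 : ℝ)
    (M : Finset (ℤ × ℤ)) (αT αS : ℝ) (κ : ℕ → ℝ)
    (w : Fin L × (Fin d × Fin d) → ℂ) (R : ℝ) (hR : ∑ p, ‖w p‖ ^ 2 ≤ R) :
    Bw d L hd hL lam lam1 M αT αS κ w ≤
      (Finset.univ.sup' ⟨⟨0, hL⟩, Finset.mem_univ _⟩
        (fun ℓ : Fin L => ((lam ℓ) ^ 2)⁻¹ * specNorm (Fmat d L lam lam1 ℓ) ^ 2))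
        * (M.card * R) + (αT + αS * specNormR (Kmat L κ)) := by
  have hR0 : 0 ≤ R := le_trans (Finset.sum_nonneg fun p _ => by positivity) hR
  unfold Bw
  have key : ∀ ℓ : Fin L,
      ((lam ℓ) ^ 2)⁻¹ * specNorm (Fmat d L lam lam1 ℓ) ^ 2 *
          Finset.univ.sup' ⟨(⟨0, hd⟩, ⟨0, hd⟩), Finset.mem_univ _⟩
            (fun n : Fin d × Fin d =>
              ∑ m ∈ M, ‖extz d (fun q => w (ℓ, q)) ((n.1 : ℤ) - m.1, (n.2 : ℤ) - m.2)‖ ^ 2)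
        ≤ (Finset.univ.sup' ⟨⟨0, hL⟩, Finset.mem_univ _⟩
            (fun ℓ : Fin L => ((lam ℓ) ^ 2)⁻¹ * specNorm (Fmat d L lam lam1 ℓ) ^ 2))
          * (M.card * R) := by
    intro ℓ
    have hsup : Finset.univ.sup' ⟨(⟨0, hd⟩, ⟨0, hd⟩), Finset.mem_univ _⟩
        (fun n : Fin d × Fin d =>
          ∑ m ∈ M, ‖extz d (fun q => w (ℓ, q)) ((n.1 : ℤ) - m.1, (n.2 : ℤ) - m.2)‖ ^ 2)
        ≤ M.card * R := by
      apply Finset.sup'_le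
      intro n _
      calc ∑ m ∈ M, ‖extz d (fun q => w (ℓ, q)) ((n.1 : ℤ) - m.1, (n.2 : ℤ) - m.2)‖ ^ 2
          ≤ ∑ _m ∈ M, R := by
            apply Finset.sum_le_sum
            intro m _
            exact le_trans (extz_sq_le d _ _) (le_trans (sum_coord_le d L w ℓ) hR)
        _ = M.card * R := by rw [Finset.sum_const, nsmul_eq_mul]
    calc ((lam ℓ) ^ 2)⁻¹ * specNorm (Fmat d L lam lam1 ℓ) ^ 2 *
          Finset.univ.sup' _ _
        ≤ ((lam ℓ) ^ 2)⁻¹ * specNorm (Fmat d L lam lam1 ℓ) ^ 2 * (M.card * R) := by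
          apply mul_le_mul_of_nonneg_left hsup (by positivity)
      _ ≤ _ := by
          apply mul_le_mul_of_nonneg_right
            (Finset.le_sup' (f := fun ℓ : Fin L => ((lam ℓ) ^ 2)⁻¹ * specNorm (Fmat d L lam lam1 ℓ) ^ 2)
              (Finset.mem_univ ℓ)) (by positivity)
  exact add_le_add_left (Finset.sup'_le _ _ fun ℓ _ => key ℓ) _

lemma Bz_ge (d L : ℕ) (hd : 0 < d) (hL : 0 < L) (lam : Fin L → ℝ) (lam1 : ℝ)
    (M : Finset (ℤ × ℤ)) (βT βS : ℝ) (hβS : 0 ≤ βS) (κ : ℕ → ℝ)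
    (w : Fin L × (Fin d × Fin d) → ℂ) :
    βT ≤ Bz d L hd hL lam lam1 M βT βS κ w := by
  unfold Bz
  have h1 : (0:ℝ) ≤ Finset.univ.sup' ⟨⟨0, hL⟩, Finset.mem_univ _⟩
      (fun ℓ : Fin L =>
        ((lam ℓ) ^ 2)⁻¹ * specNorm (Fmat d L lam lam1 ℓ) ^ 2 *
          Finset.univ.sup' ⟨(⟨0, hd⟩, ⟨0, hd⟩), Finset.mem_univ _⟩
            (fun n : Fin d × Fin d =>
              ∑ m ∈ M, ‖extz d (fun q => w (ℓ, q)) ((n.1 : ℤ) + m.1, (n.2 : ℤ) + m.2)‖ ^ 2)) := by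
    refine le_trans ?_ (Finset.le_sup' _ (Finset.mem_univ ⟨0, hL⟩))
    refine mul_nonneg (by positivity) ?_
    refine le_trans ?_ (Finset.le_sup' _ (Finset.mem_univ (⟨0, hd⟩, ⟨0, hd⟩)))
    exact Finset.sum_nonneg fun m _ => by positivity
  have h2 : (0:ℝ) ≤ βS * specNormR (Kmat L κ) :=
    mul_nonneg hβS (norm_nonneg _)
  linarith

lemma Bz_le (d L : ℕ) (hd : 0 < d) (hL : 0 < L) (lam : Fin L → ℝ) (lam1 : ℝ)
    (M : Finset (ℤ × ℤ)) (βT βS : ℝ) (κ : ℕ → ℝ)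
    (w : Fin L × (Fin d × Fin d) → ℂ) (R : ℝ) (hR : ∑ p, ‖w p‖ ^ 2 ≤ R) :
    Bz d L hd hL lam lam1 M βT βS κ w ≤
      (Finset.univ.sup' ⟨⟨0, hL⟩, Finset.mem_univ _⟩
        (fun ℓ : Fin L => ((lam ℓ) ^ 2)⁻¹ * specNorm (Fmat d L lam lam1 ℓ) ^ 2))
        * (M.card * R) + (βT + βS * specNormR (Kmat L κ)) := by
  have hR0 : 0 ≤ R := le_trans (Finset.sum_nonneg fun p _ => by positivity) hR
  unfold Bz
  have key : ∀ ℓ : Fin L,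
      ((lam ℓ) ^ 2)⁻¹ * specNorm (Fmat d L lam lam1 ℓ) ^ 2 *
          Finset.univ.sup' ⟨(⟨0, hd⟩, ⟨0, hd⟩), Finset.mem_univ _⟩
            (fun n : Fin d × Fin d =>
              ∑ m ∈ M, ‖extz d (fun q => w (ℓ, q)) ((n.1 : ℤ) + m.1, (n.2 : ℤ) + m.2)‖ ^ 2)
        ≤ (Finset.univ.sup' ⟨⟨0, hL⟩, Finset.mem_univ _⟩
            (fun ℓ : Fin L => ((lam ℓ) ^ 2)⁻¹ * specNorm (Fmat d L lam lam1 ℓ) ^ 2))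
          * (M.card * R) := by
    intro ℓ
    have hsup : Finset.univ.sup' ⟨(⟨0, hd⟩, ⟨0, hd⟩), Finset.mem_univ _⟩
        (fun n : Fin d × Fin d =>
          ∑ m ∈ M, ‖extz d (fun q => w (ℓ, q)) ((n.1 : ℤ) + m.1, (n.2 : ℤ) + m.2)‖ ^ 2)
        ≤ M.card * R := by
      apply Finset.sup'_le
      intro n _
      calc ∑ m ∈ M, ‖extz d (fun q => w (ℓ, q)) ((n.1 : ℤ) + m.1, (n.2 : ℤ) + m.2)‖ ^ 2
          ≤ ∑ _m ∈ M, R := by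
            apply Finset.sum_le_sum
            intro m _
            exact le_trans (extz_sq_le d _ _) (le_trans (sum_coord_le d L w ℓ) hR)
        _ = M.card * R := by rw [Finset.sum_const, nsmul_eq_mul]
    calc ((lam ℓ) ^ 2)⁻¹ * specNorm (Fmat d L lam lam1 ℓ) ^ 2 *
          Finset.univ.sup' _ _
        ≤ ((lam ℓ) ^ 2)⁻¹ * specNorm (Fmat d L lam lam1 ℓ) ^ 2 * (M.card * R) := by
          apply mul_le_mul_of_nonneg_left hsup (by positivity)
      _ ≤ _ := by
          apply mul_le_mul_of_nonneg_right
            (Finset.le_sup' (f := fun ℓ : Fin L => ((lam ℓ) ^ 2)⁻¹ * specNorm (Fmat d L lam lam1 ℓ) ^ 2)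
              (Finset.mem_univ ℓ)) (by positivity)
  exact add_le_add_left (Finset.sup'_le _ _ fun ℓ _ => key ℓ) _

lemma normSq_cd {n : ℕ∞} : ContDiff ℝ n fun c : ℂ => (Complex.normSq c : ℝ) := by
  have : (fun c : ℂ => (Complex.normSq c : ℝ)) = fun c : ℂ => c.re * c.re + c.im * c.im := by
    funext c; rw [Complex.normSq_apply]
  rw [this]
  have hre : ContDiff ℝ n fun c : ℂ => c.re := Complex.reCLM.contDiff
  have him : ContDiff ℝ n fun c : ℂ => c.im := Complex.imCLM.contDiff
  exact (hre.mul hre).add (him.mul him)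

lemma normsq_cd {n : ℕ∞} : ContDiff ℝ n fun c : ℂ => ‖c‖ ^ 2 := by
  have : (fun c : ℂ => ‖c‖ ^ 2) = fun c : ℂ => (Complex.normSq c : ℝ) := by
    funext c
    rw [Complex.normSq_eq_norm_sq]
  rw [this]; exact normSq_cd

lemma T_cd {n : ℕ∞} (d L : ℕ) (lam : Fin L → ℝ) (lam1 : ℝ) (ℓ : Fin L) (m : ℤ × ℤ)
    (k : Fin d × Fin d) :
    ContDiff ℝ n fun q : (Fin L × (Fin d × Fin d) → ℂ) × (Fin L × (Fin d × Fin d) → ℂ) =>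
      ∑ nn : Fin d × Fin d,
        (starRingEnd ℂ) (avec d L lam lam1 (fun ℓ' r => q.2 (ℓ', r)) ℓ m k nn) * q.1 (ℓ, nn) := by
  apply ContDiff.sum
  intro nn _
  have heq : (fun q : (Fin L × (Fin d × Fin d) → ℂ) × (Fin L × (Fin d × Fin d) → ℂ) =>
      (starRingEnd ℂ) (avec d L lam lam1 (fun ℓ' r => q.2 (ℓ', r)) ℓ m k nn) * q.1 (ℓ, nn))
      = fun q =>
        (extz d (fun r => q.2 (ℓ, r)) ((nn.1 : ℤ) - m.1, (nn.2 : ℤ) - m.2) *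
          (starRingEnd ℂ) (Complex.exp (2 * Real.pi * Complex.I * (lam1 / lam ℓ : ℝ) *
            (((k.1 : ℕ) * (nn.1 : ℕ) + (k.2 : ℕ) * (nn.2 : ℕ) : ℕ)) / (d : ℕ)))) * q.1 (ℓ, nn) := by
    funext q
    simp [avec, _root_.map_mul, Complex.conj_conj]
  rw [heq]
  have hsnd : ContDiff ℝ n fun q : (Fin L × (Fin d × Fin d) → ℂ) × (Fin L × (Fin d × Fin d) → ℂ)
      => (fun r => q.2 (ℓ, r)) := by
    apply contDiff_pi.mpr
    intro r
    exact (contDiff_apply _ _ (ℓ, r)).comp contDiff_snd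
  have hext : ContDiff ℝ n fun q : (Fin L × (Fin d × Fin d) → ℂ) × (Fin L × (Fin d × Fin d) → ℂ)
      => extz d (fun r => q.2 (ℓ, r)) ((nn.1 : ℤ) - m.1, (nn.2 : ℤ) - m.2) :=
    (extz_cd d _).comp hsnd
  exact (hext.mul contDiff_const).mul ((contDiff_apply _ _ (ℓ, nn)).comp contDiff_fst)

lemma obj_smooth (d L : ℕ) (lam : Fin L → ℝ) (lam1 : ℝ)
    (M : Finset (ℤ × ℤ)) (y : ℤ × ℤ → Fin d × Fin d → ℝ)
    (ε αT αS βT βS : ℝ) (hε : 0 < ε) (κ : ℕ → ℝ) :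
    ContDiff ℝ 1 (fun q : (Fin L × (Fin d × Fin d) → ℂ) × (Fin L × (Fin d × Fin d) → ℂ) =>
      BlindObj d L lam lam1 M y ε αT αS βT βS κ q.1 q.2) := by
  have hQ : ∀ (m : ℤ × ℤ) (k : Fin d × Fin d), ContDiff ℝ 1
      fun q : (Fin L × (Fin d × Fin d) → ℂ) × (Fin L × (Fin d × Fin d) → ℂ) =>
        (star q.1 ⬝ᵥ (Qw d L lam lam1 (fun ℓ r => q.2 (ℓ, r)) m k *ᵥ q.1)).re := by
    intro m k
    have : (fun q : (Fin L × (Fin d × Fin d) → ℂ) × (Fin L × (Fin d × Fin d) → ℂ) =>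
        (star q.1 ⬝ᵥ (Qw d L lam lam1 (fun ℓ r => q.2 (ℓ, r)) m k *ᵥ q.1)).re)
        = fun q => ∑ ℓ : Fin L, ((lam ℓ) ^ 2)⁻¹ *
            Complex.normSq (∑ nn, (starRingEnd ℂ)
              (avec d L lam lam1 (fun ℓ' r => q.2 (ℓ', r)) ℓ m k nn) * q.1 (ℓ, nn)) := by
      funext q
      exact quad_re d L lam lam1 _ m k q.1
    rw [this]
    apply ContDiff.sum
    intro ℓ _
    exact contDiff_const.mul (normSq_cd.comp (T_cd d L lam lam1 ℓ m k))
  have hpos : ∀ (m : ℤ × ℤ) (k : Fin d × Fin d)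
      (q : (Fin L × (Fin d × Fin d) → ℂ) × (Fin L × (Fin d × Fin d) → ℂ)),
      (star q.1 ⬝ᵥ (Qw d L lam lam1 (fun ℓ r => q.2 (ℓ, r)) m k *ᵥ q.1)).re + ε ≠ 0 := by
    intro m k q
    have := quad_re_nonneg d L lam lam1 (fun ℓ r => q.2 (ℓ, r)) m k q.1
    positivity
  have hloss : ContDiff ℝ 1
      (fun q : (Fin L × (Fin d × Fin d) → ℂ) × (Fin L × (Fin d × Fin d) → ℂ) =>
        ∑ m ∈ M, ∑ k : Fin d × Fin d,
          (Real.sqrt ((star q.1 ⬝ᵥ ((Qw d L lam lam1 (fun ℓ r => q.2 (ℓ, r)) m k) *ᵥ q.1)).re + ε)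
            - Real.sqrt (y m k + ε)) ^ 2) := by
    apply ContDiff.sum
    intro m _
    apply ContDiff.sum
    intro k _
    rw [contDiff_iff_contDiffAt]
    intro q0
    have h1 : ContDiffAt ℝ 1 Real.sqrt
        ((star q0.1 ⬝ᵥ (Qw d L lam lam1 (fun ℓ r => q0.2 (ℓ, r)) m k *ᵥ q0.1)).re + ε) :=
      Real.contDiffAt_sqrt (hpos m k q0)
    have h2 : ContDiffAt ℝ 1
        (fun q : (Fin L × (Fin d × Fin d) → ℂ) × (Fin L × (Fin d × Fin d) → ℂ) =>
          (star q.1 ⬝ᵥ (Qw d L lam lam1 (fun ℓ r => q.2 (ℓ, r)) m k *ᵥ q.1)).re + ε) q0 :=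
      ((hQ m k).contDiffAt).add contDiffAt_const
    exact ((h1.comp q0 h2).sub contDiffAt_const).pow 2
  have hnorm1 : ContDiff ℝ 1
      (fun q : (Fin L × (Fin d × Fin d) → ℂ) × (Fin L × (Fin d × Fin d) → ℂ) =>
        ∑ p, ‖q.1 p‖ ^ 2) := by
    apply ContDiff.sum
    intro p _
    exact normsq_cd.comp ((contDiff_apply _ _ p).comp contDiff_fst)
  have hnorm2 : ContDiff ℝ 1
      (fun q : (Fin L × (Fin d × Fin d) → ℂ) × (Fin L × (Fin d × Fin d) → ℂ) =>
        ∑ p, ‖q.2 p‖ ^ 2) := by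
    apply ContDiff.sum
    intro p _
    exact normsq_cd.comp ((contDiff_apply _ _ p).comp contDiff_snd)
  have hSpen : ∀ (f : ((Fin L × (Fin d × Fin d) → ℂ) × (Fin L × (Fin d × Fin d) → ℂ))
        → (Fin L × (Fin d × Fin d) → ℂ)), ContDiff ℝ 1 f →
      ContDiff ℝ 1 (fun q => Spen L κ (f q)) := by
    intro f hf
    unfold Spen
    apply ContDiff.sum
    intro ℓ _
    by_cases h : (ℓ : ℕ) + 1 < L
    · simp only [dif_pos h]
      apply contDiff_const.mul
      apply ContDiff.sum
      intro i _
      refine normsq_cd.comp ?_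
      exact ((contDiff_apply _ _ (⟨(ℓ : ℕ) + 1, h⟩, i)).comp hf).sub
        ((contDiff_apply _ _ (ℓ, i)).comp hf)
    · simp only [dif_neg h]
      exact contDiff_const
  unfold BlindObj
  exact ((((hloss.add (contDiff_const.mul hnorm1)).add
    (contDiff_const.mul (hSpen _ contDiff_fst))).add
    (contDiff_const.mul hnorm2)).add
    (contDiff_const.mul (hSpen _ contDiff_snd)))

lemma grad_cont (d L : ℕ) (lam : Fin L → ℝ) (lam1 : ℝ)
    (M : Finset (ℤ × ℤ)) (y : ℤ × ℤ → Fin d × Fin d → ℝ)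
    (ε αT αS βT βS : ℝ) (hε : 0 < ε) (κ : ℕ → ℝ)
    (gw : (Fin L × (Fin d × Fin d) → ℂ) → (Fin L × (Fin d × Fin d) → ℂ) →
      (Fin L × (Fin d × Fin d) → ℂ))
    (hgw : ∀ zv wv u,
      fderiv ℝ (fun wv' => BlindObj d L lam lam1 M y ε αT αS βT βS κ zv wv') wv u
        = 2 * (∑ p, (starRingEnd ℂ) (gw zv wv p) * u p).re) :
    Continuous (fun q : (Fin L × (Fin d × Fin d) → ℂ) × (Fin L × (Fin d × Fin d) → ℂ) =>
      ∑ p, ‖gw q.1 q.2 p‖ ^ 2) := by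
  classical
  let EE := Fin L × (Fin d × Fin d) → ℂ
  set Φ : EE × EE → ℝ := fun q => BlindObj d L lam lam1 M y ε αT αS βT βS κ q.1 q.2 with hΦdef
  have hΦ : ContDiff ℝ 1 Φ := obj_smooth d L lam lam1 M y ε αT αS βT βS hε κ
  have hDcont : Continuous fun q : EE × EE => fderiv ℝ Φ q := hΦ.continuous_fderiv one_ne_zero
  have hpart : ∀ (zv wv u : EE),
      fderiv ℝ (fun wv' => BlindObj d L lam lam1 M y ε αT αS βT βS κ zv wv') wv u
        = fderiv ℝ Φ (zv, wv) (0, u) := by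
    intro zv wv u
    have h2 : HasFDerivAt (fun wv' : EE => (zv, wv'))
        (((0 : EE →L[ℝ] EE)).prod (ContinuousLinearMap.id ℝ EE)) wv :=
      HasFDerivAt.prodMk (hasFDerivAt_const zv wv) (hasFDerivAt_id wv)
    have h1 : HasFDerivAt Φ (fderiv ℝ Φ (zv, wv)) (zv, wv) :=
      (hΦ.differentiable one_ne_zero (zv, wv)).hasFDerivAt
    have h3 := (h1.comp wv h2).fderiv
    have h4 : (fun wv' => BlindObj d L lam lam1 M y ε αT αS βT βS κ zv wv')
        = (Φ ∘ fun wv' : EE => (zv, wv')) := rfl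
    rw [h4, h3]
    simp
    rfl
  have hsum : ∀ (g : EE) (p : Fin L × (Fin d × Fin d)) (c : ℂ),
      (∑ q, (starRingEnd ℂ) (g q) * (Pi.single p c : (Fin L × (Fin d × Fin d)) → ℂ) q) = (starRingEnd ℂ) (g p) * c := by
    intro g p c
    rw [Finset.sum_eq_single p]
    · simp
    · intro b _ hb
      simp [Pi.single_apply, hb]
    · simp
  have hre : ∀ (zv wv : EE) (p : Fin L × (Fin d × Fin d)),
      (gw zv wv p).re = fderiv ℝ Φ (zv, wv) (0, Pi.single p 1) / 2 := by
    intro zv wv p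
    have h := hgw zv wv (Pi.single p 1)
    rw [hpart, hsum] at h
    rw [h]
    simp [Complex.conj_re]
  have him : ∀ (zv wv : EE) (p : Fin L × (Fin d × Fin d)),
      (gw zv wv p).im = fderiv ℝ Φ (zv, wv) (0, Pi.single p Complex.I) / 2 := by
    intro zv wv p
    have h := hgw zv wv (Pi.single p Complex.I)
    rw [hpart, hsum] at h
    rw [h]
    simp [Complex.mul_re, Complex.conj_re, Complex.conj_im]
  have hgcont : Continuous fun q : EE × EE => gw q.1 q.2 := by
    apply continuous_pi
    intro p
    have heq : (fun q : EE × EE => gw q.1 q.2 p)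
        = fun q : EE × EE =>
          ((fderiv ℝ Φ q (0, Pi.single p 1) / 2 : ℝ) : ℂ)
            + ((fderiv ℝ Φ q (0, Pi.single p Complex.I) / 2 : ℝ) : ℂ) * Complex.I := by
      funext q
      apply Complex.ext
      · rw [hre q.1 q.2 p]
        simp
      · rw [him q.1 q.2 p]
        simp
    rw [heq]
    have c1 : Continuous fun q : EE × EE => fderiv ℝ Φ q (0, Pi.single p 1) :=
      hDcont.clm_apply continuous_const
    have c2 : Continuous fun q : EE × EE => fderiv ℝ Φ q (0, Pi.single p Complex.I) :=
      hDcont.clm_apply continuous_const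
    exact (Complex.continuous_ofReal.comp (c1.div_const 2)).add
      ((Complex.continuous_ofReal.comp (c2.div_const 2)).mul continuous_const)
  apply continuous_finset_sum
  intro p _
  exact (((continuous_apply p).comp hgcont).norm).pow 2

set_option maxHeartbeats 1600000 in
/-- For the alternating amplitude-flow algorithm for blind
polychromatic ptychography (`ε, α_T, β_T > 0`, AGA step sizes bounded between
`1/B(w^{t−1})` resp. `1/B(z^t)` and `τ^{−N}/B(w^{t−1})` resp. `τ^{−N}/B(z^t)`,
each subiteration satisfying its descent inequality), the full Wirtinger gradient
vanishes along the iterates: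
`‖∇𝔍(z^t,w^t)‖₂² = ‖∇_z𝔍(z^t,w^t)‖₂² + ‖∇_w𝔍(z^t,w^t)‖₂² → 0` as `t → ∞`. -/
theorem stmt17
    (d L : ℕ) (hd : 0 < d) (hL : 0 < L)
    (lam : Fin L → ℝ) (hlam : ∀ ℓ, 0 < lam ℓ) (hmono : StrictMono lam)
    (M : Finset (ℤ × ℤ))
    (hM : ∀ m ∈ M, -(d : ℤ) ≤ m.1 ∧ m.1 ≤ (d : ℤ) ∧ -(d : ℤ) ≤ m.2 ∧ m.2 ≤ (d : ℤ))
    (y : ℤ × ℤ → Fin d × Fin d → ℝ) (hy : ∀ m k, 0 ≤ y m k)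
    (ε αT αS βT βS : ℝ) (hε : 0 < ε)
    (hαT : 0 < αT) (hαS : 0 ≤ αS) (hβT : 0 < βT) (hβS : 0 ≤ βS)
    (κ : ℕ → ℝ) (hκ : ∀ ℓ, 1 ≤ ℓ → ℓ ≤ L - 1 → 0 < κ ℓ)
    (τ : ℝ) (N : ℕ) (hτ : τ ∈ Set.Ioo (0 : ℝ) 1)
    (gz gw : (Fin L × (Fin d × Fin d) → ℂ) → (Fin L × (Fin d × Fin d) → ℂ) →
      (Fin L × (Fin d × Fin d) → ℂ))
    (hdiffz : ∀ wv, Differentiable ℝ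
      (fun zv => BlindObj d L lam (lam ⟨0, hL⟩) M y ε αT αS βT βS κ zv wv))
    (hdiffw : ∀ zv, Differentiable ℝ
      (fun wv => BlindObj d L lam (lam ⟨0, hL⟩) M y ε αT αS βT βS κ zv wv))
    (hgz : ∀ zv wv u,
      fderiv ℝ (fun zv' => BlindObj d L lam (lam ⟨0, hL⟩) M y ε αT αS βT βS κ zv' wv) zv u
        = 2 * (∑ p, (starRingEnd ℂ) (gz zv wv p) * u p).re)
    (hgw : ∀ zv wv u,
      fderiv ℝ (fun wv' => BlindObj d L lam (lam ⟨0, hL⟩) M y ε αT αS βT βS κ zv wv') wv u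
        = 2 * (∑ p, (starRingEnd ℂ) (gw zv wv p) * u p).re)
    (Iz Iw : ℕ) (hIz : 1 ≤ Iz) (hIw : 1 ≤ Iw)
    (z w : ℕ → (Fin L × (Fin d × Fin d) → ℂ))
    (zz ww : ℕ → ℕ → (Fin L × (Fin d × Fin d) → ℂ))
    (μ ν : ℕ → ℕ → ℝ)
    (hzz0 : ∀ t : ℕ, zz (t + 1) 0 = z t)
    (hzend : ∀ t : ℕ, z (t + 1) = zz (t + 1) Iz)
    (hww0 : ∀ t : ℕ, ww (t + 1) 0 = w t)
    (hwend : ∀ t : ℕ, w (t + 1) = ww (t + 1) Iw)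
    (hupz : ∀ t : ℕ, ∀ i ∈ Finset.Icc 1 Iz,
      zz (t + 1) i = zz (t + 1) (i - 1) - μ (t + 1) i • gz (zz (t + 1) (i - 1)) (w t))
    (hupw : ∀ t : ℕ, ∀ j ∈ Finset.Icc 1 Iw,
      ww (t + 1) j = ww (t + 1) (j - 1) - ν (t + 1) j • gw (z (t + 1)) (ww (t + 1) (j - 1)))
    (hdescz : ∀ t : ℕ, ∀ i ∈ Finset.Icc 1 Iz,
      BlindObj d L lam (lam ⟨0, hL⟩) M y ε αT αS βT βS κ (zz (t + 1) i) (w t)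
          - BlindObj d L lam (lam ⟨0, hL⟩) M y ε αT αS βT βS κ (zz (t + 1) (i - 1)) (w t)
        ≤ - μ (t + 1) i * ∑ p, ‖gz (zz (t + 1) (i - 1)) (w t) p‖ ^ 2)
    (hdescw : ∀ t : ℕ, ∀ j ∈ Finset.Icc 1 Iw,
      BlindObj d L lam (lam ⟨0, hL⟩) M y ε αT αS βT βS κ (z (t + 1)) (ww (t + 1) j)
          - BlindObj d L lam (lam ⟨0, hL⟩) M y ε αT αS βT βS κ (z (t + 1)) (ww (t + 1) (j - 1))
        ≤ - ν (t + 1) j * ∑ p, ‖gw (z (t + 1)) (ww (t + 1) (j - 1)) p‖ ^ 2)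
    (hμ : ∀ t : ℕ, ∀ i ∈ Finset.Icc 1 Iz,
      (Bw d L hd hL lam (lam ⟨0, hL⟩) M αT αS κ (w t))⁻¹ ≤ μ (t + 1) i ∧
        μ (t + 1) i ≤ (τ ^ N)⁻¹ / Bw d L hd hL lam (lam ⟨0, hL⟩) M αT αS κ (w t))
    (hν : ∀ t : ℕ, ∀ j ∈ Finset.Icc 1 Iw,
      (Bz d L hd hL lam (lam ⟨0, hL⟩) M βT βS κ (z (t + 1)))⁻¹ ≤ ν (t + 1) j ∧
        ν (t + 1) j ≤ (τ ^ N)⁻¹ / Bz d L hd hL lam (lam ⟨0, hL⟩) M βT βS κ (z (t + 1)))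
    :
    Filter.Tendsto
      (fun t : ℕ =>
        (∑ p, ‖gz (z t) (w t) p‖ ^ 2) + ∑ p, ‖gw (z t) (w t) p‖ ^ 2)
      Filter.atTop (nhds 0) := by
  classical
  have hτ0 : 0 < τ := hτ.1
  -- abbreviations via plain expressions
  have hJnn : ∀ zv wv, 0 ≤ (BlindObj d L lam (lam ⟨0, hL⟩) M y ε αT αS βT βS κ (zv) (wv)) := fun zv wv =>
    obj_nonneg d L lam _ M y ε αT αS βT βS hαT.le hαS hβT.le hβS κ hκ zv wv
  have hterm : ∀ zv wv : Fin L × (Fin d × Fin d) → ℂ,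
      αT * ∑ p, ‖zv p‖ ^ 2 ≤ (BlindObj d L lam (lam ⟨0, hL⟩) M y ε αT αS βT βS κ (zv) (wv)) ∧ βT * ∑ p, ‖wv p‖ ^ 2 ≤ (BlindObj d L lam (lam ⟨0, hL⟩) M y ε αT αS βT βS κ (zv) (wv)) := by
    intro zv wv
    have h1 : (0:ℝ) ≤ ∑ m ∈ M, ∑ k : Fin d × Fin d,
        (Real.sqrt ((star zv ⬝ᵥ ((Qw d L lam (lam ⟨0, hL⟩) (fun ℓ q => wv (ℓ, q)) m k) *ᵥ zv)).re + ε)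
          - Real.sqrt (y m k + ε)) ^ 2 := by positivity
    have h2 : (0:ℝ) ≤ αT * ∑ p, ‖zv p‖ ^ 2 := by positivity
    have h3 : (0:ℝ) ≤ αS * Spen L κ zv := mul_nonneg hαS (Spen_nonneg L κ hκ zv)
    have h4 : (0:ℝ) ≤ βT * ∑ p, ‖wv p‖ ^ 2 := by positivity
    have h5 : (0:ℝ) ≤ βS * Spen L κ wv := mul_nonneg hβS (Spen_nonneg L κ hκ wv)
    unfold BlindObj
    constructor <;> linarith
  -- positivity of step sizes
  have hBwpos : ∀ wv, 0 < Bw d L hd hL lam (lam ⟨0, hL⟩) M αT αS κ wv := fun wv =>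
    lt_of_lt_of_le hαT (Bw_ge d L hd hL lam (lam ⟨0, hL⟩) M αT αS hαS κ wv)
  have hBzpos : ∀ zv, 0 < Bz d L hd hL lam (lam ⟨0, hL⟩) M βT βS κ zv := fun zv =>
    lt_of_lt_of_le hβT (Bz_ge d L hd hL lam (lam ⟨0, hL⟩) M βT βS hβS κ zv)
  have hμ0 : ∀ t, ∀ i ∈ Finset.Icc 1 Iz, 0 < μ (t+1) i := fun t i hi =>
    lt_of_lt_of_le (inv_pos.2 (hBwpos (w t))) (hμ t i hi).1
  have hν0 : ∀ t, ∀ j ∈ Finset.Icc 1 Iw, 0 < ν (t+1) j := fun t j hj =>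
    lt_of_lt_of_le (inv_pos.2 (hBzpos (z (t+1)))) (hν t j hj).1
  -- monotone chains
  have hzchain : ∀ t i j, j ≤ Iz → i ≤ j →
      (BlindObj d L lam (lam ⟨0, hL⟩) M y ε αT αS βT βS κ (zz (t+1) j) (w t)) ≤ (BlindObj d L lam (lam ⟨0, hL⟩) M y ε αT αS βT βS κ (zz (t+1) i) (w t)) := by
    intro t i j
    induction j with
    | zero =>
      intro _ hij
      have : i = 0 := Nat.le_zero.mp hij
      rw [this]
    | succ j ih =>
      intro hj hij
      rcases Nat.lt_or_ge i (j+1) with hlt | hge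
      · have hmem : j + 1 ∈ Finset.Icc 1 Iz := Finset.mem_Icc.mpr ⟨by omega, hj⟩
        have h1 := hdescz t (j+1) hmem
        simp only [Nat.add_sub_cancel] at h1
        have h2 : 0 ≤ μ (t+1) (j+1) * ∑ p, ‖gz (zz (t+1) j) (w t) p‖ ^ 2 :=
          mul_nonneg (hμ0 t (j+1) hmem).le (Finset.sum_nonneg fun p _ => by positivity)
        have h3 := ih (by omega) (by omega)
        linarith
      · have : i = j + 1 := by omega
        rw [this]
  have hwchain : ∀ t i j, j ≤ Iw → i ≤ j →
      (BlindObj d L lam (lam ⟨0, hL⟩) M y ε αT αS βT βS κ (z (t+1)) (ww (t+1) j)) ≤ (BlindObj d L lam (lam ⟨0, hL⟩) M y ε αT αS βT βS κ (z (t+1)) (ww (t+1) i)) := by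
    intro t i j
    induction j with
    | zero =>
      intro _ hij
      have : i = 0 := Nat.le_zero.mp hij
      rw [this]
    | succ j ih =>
      intro hj hij
      rcases Nat.lt_or_ge i (j+1) with hlt | hge
      · have hmem : j + 1 ∈ Finset.Icc 1 Iw := Finset.mem_Icc.mpr ⟨by omega, hj⟩
        have h1 := hdescw t (j+1) hmem
        simp only [Nat.add_sub_cancel] at h1
        have h2 : 0 ≤ ν (t+1) (j+1) * ∑ p, ‖gw (z (t+1)) (ww (t+1) j) p‖ ^ 2 :=
          mul_nonneg (hν0 t (j+1) hmem).le (Finset.sum_nonneg fun p _ => by positivity)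
        have h3 := ih (by omega) (by omega)
        linarith
      · have : i = j + 1 := by omega
        rw [this]
  -- intermediate inequalities
  have hmidz : ∀ t, (BlindObj d L lam (lam ⟨0, hL⟩) M y ε αT αS βT βS κ (z (t+1)) (w t)) ≤ (BlindObj d L lam (lam ⟨0, hL⟩) M y ε αT αS βT βS κ (z t) (w t)) := by
    intro t
    have h := hzchain t 0 Iz le_rfl (Nat.zero_le _)
    rw [hzz0] at h
    rw [hzend]
    exact h
  have hmidw : ∀ t, (BlindObj d L lam (lam ⟨0, hL⟩) M y ε αT αS βT βS κ (z (t+1)) (w (t+1))) ≤ (BlindObj d L lam (lam ⟨0, hL⟩) M y ε αT αS βT βS κ (z (t+1)) (w t)) := by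
    intro t
    have h := hwchain t 0 Iw le_rfl (Nat.zero_le _)
    rw [hww0] at h
    rw [hwend]
    exact h
  have hf1 : ∀ t, (BlindObj d L lam (lam ⟨0, hL⟩) M y ε αT αS βT βS κ (z (t+1)) (w (t+1))) ≤ (BlindObj d L lam (lam ⟨0, hL⟩) M y ε αT αS βT βS κ (z t) (w t)) := fun t =>
    le_trans (hmidw t) (hmidz t)
  have hfa : Antitone (fun t => (BlindObj d L lam (lam ⟨0, hL⟩) M y ε αT αS βT βS κ (z t) (w t))) := antitone_nat_of_succ_le hf1
  -- convergence of objective values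
  have hbdd : BddBelow (Set.range fun t => (BlindObj d L lam (lam ⟨0, hL⟩) M y ε αT αS βT βS κ (z t) (w t))) := by
    refine ⟨0, fun x hx => ?_⟩
    obtain ⟨t, rfl⟩ := hx
    exact hJnn _ _
  have hconv : Filter.Tendsto (fun t => (BlindObj d L lam (lam ⟨0, hL⟩) M y ε αT αS βT βS κ (z t) (w t))) Filter.atTop
      (nhds (⨅ t, (BlindObj d L lam (lam ⟨0, hL⟩) M y ε αT αS βT βS κ (z t) (w t)))) := tendsto_atTop_ciInf hfa hbdd
  have hδ : Filter.Tendsto (fun t => (BlindObj d L lam (lam ⟨0, hL⟩) M y ε αT αS βT βS κ (z t) (w t)) - (BlindObj d L lam (lam ⟨0, hL⟩) M y ε αT αS βT βS κ (z (t+1)) (w (t+1)))) Filter.atTop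
      (nhds 0) := by
    have h2 : Filter.Tendsto (fun t => (BlindObj d L lam (lam ⟨0, hL⟩) M y ε αT αS βT βS κ (z (t+1)) (w (t+1)))) Filter.atTop
        (nhds (⨅ t, (BlindObj d L lam (lam ⟨0, hL⟩) M y ε αT αS βT βS κ (z t) (w t)))) := hconv.comp (Filter.tendsto_add_atTop_nat 1)
    simpa using hconv.sub h2
  have hδnn : ∀ t, 0 ≤ (BlindObj d L lam (lam ⟨0, hL⟩) M y ε αT αS βT βS κ (z t) (w t)) - (BlindObj d L lam (lam ⟨0, hL⟩) M y ε αT αS βT βS κ (z (t+1)) (w (t+1))) := fun t => sub_nonneg.2 (hf1 t)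
  -- uniform bounds on B
  have hwR : ∀ t, ∑ p, ‖w t p‖ ^ 2 ≤ (BlindObj d L lam (lam ⟨0, hL⟩) M y ε αT αS βT βS κ (z 0) (w 0)) / βT := by
    intro t
    have h := (hterm (z t) (w t)).2
    have hft : (BlindObj d L lam (lam ⟨0, hL⟩) M y ε αT αS βT βS κ (z t) (w t)) ≤ (BlindObj d L lam (lam ⟨0, hL⟩) M y ε αT αS βT βS κ (z 0) (w 0)) := hfa (Nat.zero_le t)
    rw [le_div_iff₀ hβT]
    nlinarith
  have hzR : ∀ t, ∑ p, ‖z t p‖ ^ 2 ≤ (BlindObj d L lam (lam ⟨0, hL⟩) M y ε αT αS βT βS κ (z 0) (w 0)) / αT := by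
    intro t
    have h := (hterm (z t) (w t)).1
    have hft : (BlindObj d L lam (lam ⟨0, hL⟩) M y ε αT αS βT βS κ (z t) (w t)) ≤ (BlindObj d L lam (lam ⟨0, hL⟩) M y ε αT αS βT βS κ (z 0) (w 0)) := hfa (Nat.zero_le t)
    rw [le_div_iff₀ hαT]
    nlinarith
  have hBwle : ∀ t, Bw d L hd hL lam (lam ⟨0, hL⟩) M αT αS κ (w t) ≤
      (Finset.univ.sup' ⟨⟨0, hL⟩, Finset.mem_univ _⟩
        (fun ℓ : Fin L => ((lam ℓ) ^ 2)⁻¹ * specNorm (Fmat d L lam (lam ⟨0, hL⟩) ℓ) ^ 2))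
        * (M.card * ((BlindObj d L lam (lam ⟨0, hL⟩) M y ε αT αS βT βS κ (z 0) (w 0)) / βT)) + (αT + αS * specNormR (Kmat L κ)) := fun t =>
    Bw_le d L hd hL lam (lam ⟨0, hL⟩) M αT αS κ (w t) _ (hwR t)
  have hBzle : ∀ t, Bz d L hd hL lam (lam ⟨0, hL⟩) M βT βS κ (z t) ≤
      (Finset.univ.sup' ⟨⟨0, hL⟩, Finset.mem_univ _⟩
        (fun ℓ : Fin L => ((lam ℓ) ^ 2)⁻¹ * specNorm (Fmat d L lam (lam ⟨0, hL⟩) ℓ) ^ 2))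
        * (M.card * ((BlindObj d L lam (lam ⟨0, hL⟩) M y ε αT αS βT βS κ (z 0) (w 0)) / αT)) + (βT + βS * specNormR (Kmat L κ)) := fun t =>
    Bz_le d L hd hL lam (lam ⟨0, hL⟩) M βT βS κ (z t) _ (hzR t)
  set Cw : ℝ := (Finset.univ.sup' ⟨⟨0, hL⟩, Finset.mem_univ _⟩
        (fun ℓ : Fin L => ((lam ℓ) ^ 2)⁻¹ * specNorm (Fmat d L lam (lam ⟨0, hL⟩) ℓ) ^ 2))
        * (M.card * ((BlindObj d L lam (lam ⟨0, hL⟩) M y ε αT αS βT βS κ (z 0) (w 0)) / βT)) + (αT + αS * specNormR (Kmat L κ)) with hCwdef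
  set Cz : ℝ := (Finset.univ.sup' ⟨⟨0, hL⟩, Finset.mem_univ _⟩
        (fun ℓ : Fin L => ((lam ℓ) ^ 2)⁻¹ * specNorm (Fmat d L lam (lam ⟨0, hL⟩) ℓ) ^ 2))
        * (M.card * ((BlindObj d L lam (lam ⟨0, hL⟩) M y ε αT αS βT βS κ (z 0) (w 0)) / αT)) + (βT + βS * specNormR (Kmat L κ)) with hCzdef
  have hCwpos : 0 < Cw := lt_of_lt_of_le (hBwpos (w 0)) (hBwle 0)
  have hCzpos : 0 < Cz := lt_of_lt_of_le (hBzpos (z 0)) (hBzle 0)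
  -- per-subiteration gradient bounds
  have hstepz : ∀ t, ∀ i ∈ Finset.Icc 1 Iz,
      ∑ p, ‖gz (zz (t+1) (i-1)) (w t) p‖ ^ 2 ≤ Cw * ((BlindObj d L lam (lam ⟨0, hL⟩) M y ε αT αS βT βS κ (z t) (w t)) - (BlindObj d L lam (lam ⟨0, hL⟩) M y ε αT αS βT βS κ (z (t+1)) (w (t+1)))) := by
    intro t i hi
    obtain ⟨hi1, hi2⟩ := Finset.mem_Icc.mp hi
    have hdes := hdescz t i hi
    have hup : (BlindObj d L lam (lam ⟨0, hL⟩) M y ε αT αS βT βS κ (zz (t+1) (i-1)) (w t)) ≤ (BlindObj d L lam (lam ⟨0, hL⟩) M y ε αT αS βT βS κ (z t) (w t)) := by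
      have h := hzchain t 0 (i-1) (by omega) (Nat.zero_le _)
      rw [hzz0] at h
      exact h
    have hlow : (BlindObj d L lam (lam ⟨0, hL⟩) M y ε αT αS βT βS κ (z (t+1)) (w (t+1))) ≤ (BlindObj d L lam (lam ⟨0, hL⟩) M y ε αT αS βT βS κ (zz (t+1) i) (w t)) := by
      have h1 := hzchain t i Iz le_rfl hi2
      rw [← hzend] at h1
      exact le_trans (hmidw t) h1
    have hS : 0 ≤ ∑ p, ‖gz (zz (t+1) (i-1)) (w t) p‖ ^ 2 :=
      Finset.sum_nonneg fun p _ => by positivity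
    have hmuS : μ (t+1) i * ∑ p, ‖gz (zz (t+1) (i-1)) (w t) p‖ ^ 2
        ≤ (BlindObj d L lam (lam ⟨0, hL⟩) M y ε αT αS βT βS κ (z t) (w t)) - (BlindObj d L lam (lam ⟨0, hL⟩) M y ε αT αS βT βS κ (z (t+1)) (w (t+1))) := by nlinarith
    have hmu_ge : Cw⁻¹ ≤ μ (t+1) i :=
      le_trans (inv_anti₀ (hBwpos (w t)) (hBwle t)) (hμ t i hi).1
    have h3 : Cw⁻¹ * ∑ p, ‖gz (zz (t+1) (i-1)) (w t) p‖ ^ 2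
        ≤ (BlindObj d L lam (lam ⟨0, hL⟩) M y ε αT αS βT βS κ (z t) (w t)) - (BlindObj d L lam (lam ⟨0, hL⟩) M y ε αT αS βT βS κ (z (t+1)) (w (t+1))) :=
      le_trans (mul_le_mul_of_nonneg_right hmu_ge hS) hmuS
    calc ∑ p, ‖gz (zz (t+1) (i-1)) (w t) p‖ ^ 2
        = Cw * (Cw⁻¹ * ∑ p, ‖gz (zz (t+1) (i-1)) (w t) p‖ ^ 2) := by
          field_simp
      _ ≤ Cw * ((BlindObj d L lam (lam ⟨0, hL⟩) M y ε αT αS βT βS κ (z t) (w t)) - (BlindObj d L lam (lam ⟨0, hL⟩) M y ε αT αS βT βS κ (z (t+1)) (w (t+1)))) :=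
          mul_le_mul_of_nonneg_left h3 hCwpos.le
  have hstepw : ∀ t, ∀ j ∈ Finset.Icc 1 Iw,
      ∑ p, ‖gw (z (t+1)) (ww (t+1) (j-1)) p‖ ^ 2 ≤ Cz * ((BlindObj d L lam (lam ⟨0, hL⟩) M y ε αT αS βT βS κ (z t) (w t)) - (BlindObj d L lam (lam ⟨0, hL⟩) M y ε αT αS βT βS κ (z (t+1)) (w (t+1)))) := by
    intro t j hj
    obtain ⟨hj1, hj2⟩ := Finset.mem_Icc.mp hj
    have hdes := hdescw t j hj
    have hup : (BlindObj d L lam (lam ⟨0, hL⟩) M y ε αT αS βT βS κ (z (t+1)) (ww (t+1) (j-1))) ≤ (BlindObj d L lam (lam ⟨0, hL⟩) M y ε αT αS βT βS κ (z t) (w t)) := by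
      have h := hwchain t 0 (j-1) (by omega) (Nat.zero_le _)
      rw [hww0] at h
      exact le_trans h (hmidz t)
    have hlow : (BlindObj d L lam (lam ⟨0, hL⟩) M y ε αT αS βT βS κ (z (t+1)) (w (t+1))) ≤ (BlindObj d L lam (lam ⟨0, hL⟩) M y ε αT αS βT βS κ (z (t+1)) (ww (t+1) j)) := by
      have h1 := hwchain t j Iw le_rfl hj2
      rw [← hwend] at h1
      exact h1
    have hS : 0 ≤ ∑ p, ‖gw (z (t+1)) (ww (t+1) (j-1)) p‖ ^ 2 :=
      Finset.sum_nonneg fun p _ => by positivity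
    have hmuS : ν (t+1) j * ∑ p, ‖gw (z (t+1)) (ww (t+1) (j-1)) p‖ ^ 2
        ≤ (BlindObj d L lam (lam ⟨0, hL⟩) M y ε αT αS βT βS κ (z t) (w t)) - (BlindObj d L lam (lam ⟨0, hL⟩) M y ε αT αS βT βS κ (z (t+1)) (w (t+1))) := by nlinarith
    have hmu_ge : Cz⁻¹ ≤ ν (t+1) j :=
      le_trans (inv_anti₀ (hBzpos (z (t+1))) (hBzle (t+1))) (hν t j hj).1
    have h3 : Cz⁻¹ * ∑ p, ‖gw (z (t+1)) (ww (t+1) (j-1)) p‖ ^ 2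
        ≤ (BlindObj d L lam (lam ⟨0, hL⟩) M y ε αT αS βT βS κ (z t) (w t)) - (BlindObj d L lam (lam ⟨0, hL⟩) M y ε αT αS βT βS κ (z (t+1)) (w (t+1))) :=
      le_trans (mul_le_mul_of_nonneg_right hmu_ge hS) hmuS
    calc ∑ p, ‖gw (z (t+1)) (ww (t+1) (j-1)) p‖ ^ 2
        = Cz * (Cz⁻¹ * ∑ p, ‖gw (z (t+1)) (ww (t+1) (j-1)) p‖ ^ 2) := by
          field_simp
      _ ≤ Cz * ((BlindObj d L lam (lam ⟨0, hL⟩) M y ε αT αS βT βS κ (z t) (w t)) - (BlindObj d L lam (lam ⟨0, hL⟩) M y ε αT αS βT βS κ (z (t+1)) (w (t+1)))) :=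
          mul_le_mul_of_nonneg_left h3 hCzpos.le
  have hCwδ : Filter.Tendsto (fun t => Cw * ((BlindObj d L lam (lam ⟨0, hL⟩) M y ε αT αS βT βS κ (z t) (w t)) - (BlindObj d L lam (lam ⟨0, hL⟩) M y ε αT αS βT βS κ (z (t+1)) (w (t+1)))))
      Filter.atTop (nhds 0) := by simpa using hδ.const_mul Cw
  have hCzδ : Filter.Tendsto (fun t => Cz * ((BlindObj d L lam (lam ⟨0, hL⟩) M y ε αT αS βT βS κ (z t) (w t)) - (BlindObj d L lam (lam ⟨0, hL⟩) M y ε αT αS βT βS κ (z (t+1)) (w (t+1)))))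
      Filter.atTop (nhds 0) := by simpa using hδ.const_mul Cz
  -- convergence of the z-gradient at the iterates
  have hmem1 : (1 : ℕ) ∈ Finset.Icc 1 Iz := Finset.mem_Icc.mpr ⟨le_rfl, hIz⟩
  have hmem1w : (1 : ℕ) ∈ Finset.Icc 1 Iw := Finset.mem_Icc.mpr ⟨le_rfl, hIw⟩
  have ha : Filter.Tendsto (fun t => ∑ p, ‖gz (z t) (w t) p‖ ^ 2) Filter.atTop (nhds 0) := by
    apply squeeze_zero (fun t => Finset.sum_nonneg fun p _ => by positivity) _ hCwδ
    intro t
    have h := hstepz t 1 hmem1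
    simp only [Nat.sub_self, hzz0] at h
    exact h
  have hb : Filter.Tendsto (fun t => ∑ p, ‖gw (z (t+1)) (w t) p‖ ^ 2) Filter.atTop (nhds 0) := by
    apply squeeze_zero (fun t => Finset.sum_nonneg fun p _ => by positivity) _ hCzδ
    intro t
    have h := hstepw t 1 hmem1w
    simp only [Nat.sub_self, hww0] at h
    exact h
  -- displacement bound
  have hμub : ∀ t, ∀ i ∈ Finset.Icc 1 Iz, μ (t+1) i ≤ (τ ^ N)⁻¹ / αT := by
    intro t i hi
    refine le_trans (hμ t i hi).2 ?_
    exact div_le_div_of_nonneg_left (inv_nonneg.2 (pow_nonneg hτ0.le N)) hαT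
      (Bw_ge d L hd hL lam (lam ⟨0, hL⟩) M αT αS hαS κ (w t))
  have hgznorm : ∀ t, ∀ i ∈ Finset.Icc 1 Iz,
      ‖gz (zz (t+1) (i-1)) (w t)‖ ≤ Real.sqrt (Cw * ((BlindObj d L lam (lam ⟨0, hL⟩) M y ε αT αS βT βS κ (z t) (w t)) - (BlindObj d L lam (lam ⟨0, hL⟩) M y ε αT αS βT βS κ (z (t+1)) (w (t+1))))) := by
    intro t i hi
    have hS := hstepz t i hi
    rw [pi_norm_le_iff_of_nonneg (Real.sqrt_nonneg _)]
    intro p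
    calc ‖gz (zz (t+1) (i-1)) (w t) p‖
        = Real.sqrt (‖gz (zz (t+1) (i-1)) (w t) p‖ ^ 2) := (Real.sqrt_sq (norm_nonneg _)).symm
      _ ≤ Real.sqrt (Cw * ((BlindObj d L lam (lam ⟨0, hL⟩) M y ε αT αS βT βS κ (z t) (w t)) - (BlindObj d L lam (lam ⟨0, hL⟩) M y ε αT αS βT βS κ (z (t+1)) (w (t+1))))) := by
          apply Real.sqrt_le_sqrt
          exact le_trans (Finset.single_le_sum
            (f := fun q => ‖gz (zz (t+1) (i-1)) (w t) q‖ ^ 2)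
            (fun q _ => by positivity) (Finset.mem_univ p)) hS
  have hdisp : ∀ t, dist (z (t+1)) (z t) ≤
      (Iz : ℝ) * ((τ ^ N)⁻¹ / αT) * Real.sqrt (Cw * ((BlindObj d L lam (lam ⟨0, hL⟩) M y ε αT αS βT βS κ (z t) (w t)) - (BlindObj d L lam (lam ⟨0, hL⟩) M y ε αT αS βT βS κ (z (t+1)) (w (t+1))))) := by
    intro t
    have hCnn : 0 ≤ (τ ^ N)⁻¹ / αT := div_nonneg (inv_nonneg.2 (pow_nonneg hτ0.le N)) hαT.le
    have hsnn : 0 ≤ Real.sqrt (Cw * ((BlindObj d L lam (lam ⟨0, hL⟩) M y ε αT αS βT βS κ (z t) (w t)) - (BlindObj d L lam (lam ⟨0, hL⟩) M y ε αT αS βT βS κ (z (t+1)) (w (t+1))))) := Real.sqrt_nonneg _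
    have key : ∀ i, i ≤ Iz → dist (zz (t+1) i) (z t) ≤
        (i : ℝ) * ((τ ^ N)⁻¹ / αT) * Real.sqrt (Cw * ((BlindObj d L lam (lam ⟨0, hL⟩) M y ε αT αS βT βS κ (z t) (w t)) - (BlindObj d L lam (lam ⟨0, hL⟩) M y ε αT αS βT βS κ (z (t+1)) (w (t+1))))) := by
      intro i
      induction i with
      | zero =>
        intro _
        rw [hzz0]
        simp
      | succ i ih =>
        intro hlt
        have hmem : i + 1 ∈ Finset.Icc 1 Iz := Finset.mem_Icc.mpr ⟨by omega, hlt⟩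
        have hupd := hupz t (i+1) hmem
        simp only [Nat.add_sub_cancel] at hupd
        have hd1 : dist (zz (t+1) (i+1)) (zz (t+1) i)
            = μ (t+1) (i+1) * ‖gz (zz (t+1) i) (w t)‖ := by
          rw [hupd, dist_eq_norm]
          simp only [sub_sub_cancel_left]
          rw [norm_neg, norm_smul, Real.norm_eq_abs, abs_of_nonneg (hμ0 t (i+1) hmem).le]
        have hd2 : μ (t+1) (i+1) * ‖gz (zz (t+1) i) (w t)‖ ≤
            ((τ ^ N)⁻¹ / αT) * Real.sqrt (Cw * ((BlindObj d L lam (lam ⟨0, hL⟩) M y ε αT αS βT βS κ (z t) (w t)) - (BlindObj d L lam (lam ⟨0, hL⟩) M y ε αT αS βT βS κ (z (t+1)) (w (t+1))))) := by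
          have h1 := hμub t (i+1) hmem
          have h2 := hgznorm t (i+1) hmem
          simp only [Nat.add_sub_cancel] at h2
          exact mul_le_mul h1 h2 (norm_nonneg _) hCnn
        have h3 := ih (by omega)
        calc dist (zz (t+1) (i+1)) (z t)
            ≤ dist (zz (t+1) (i+1)) (zz (t+1) i) + dist (zz (t+1) i) (z t) := dist_triangle _ _ _
          _ ≤ ((τ ^ N)⁻¹ / αT) * Real.sqrt (Cw * ((BlindObj d L lam (lam ⟨0, hL⟩) M y ε αT αS βT βS κ (z t) (w t)) - (BlindObj d L lam (lam ⟨0, hL⟩) M y ε αT αS βT βS κ (z (t+1)) (w (t+1)))))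
              + (i : ℝ) * ((τ ^ N)⁻¹ / αT) *
                Real.sqrt (Cw * ((BlindObj d L lam (lam ⟨0, hL⟩) M y ε αT αS βT βS κ (z t) (w t)) - (BlindObj d L lam (lam ⟨0, hL⟩) M y ε αT αS βT βS κ (z (t+1)) (w (t+1))))) := by
              rw [hd1]
              exact add_le_add hd2 h3
          _ = ((i : ℕ) + 1 : ℝ) * ((τ ^ N)⁻¹ / αT) *
                Real.sqrt (Cw * ((BlindObj d L lam (lam ⟨0, hL⟩) M y ε αT αS βT βS κ (z t) (w t)) - (BlindObj d L lam (lam ⟨0, hL⟩) M y ε αT αS βT βS κ (z (t+1)) (w (t+1))))) := by ring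
          _ = _ := by push_cast; ring
    have h := key Iz le_rfl
    rw [← hzend] at h
    exact h
  have hdisp0 : Filter.Tendsto (fun t => dist (z (t+1)) (z t)) Filter.atTop (nhds 0) := by
    apply squeeze_zero (fun t => dist_nonneg) hdisp
    have h2 : Filter.Tendsto
        (fun t => Real.sqrt (Cw * ((BlindObj d L lam (lam ⟨0, hL⟩) M y ε αT αS βT βS κ (z t) (w t)) - (BlindObj d L lam (lam ⟨0, hL⟩) M y ε αT αS βT βS κ (z (t+1)) (w (t+1))))))
        Filter.atTop (nhds 0) := by
      have := (Real.continuous_sqrt.tendsto 0).comp hCwδ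
      simpa [Function.comp_def] using this
    simpa using h2.const_mul ((Iz : ℝ) * ((τ ^ N)⁻¹ / αT))
  -- continuity of the w-gradient
  have hG : Continuous (fun q : (Fin L × (Fin d × Fin d) → ℂ) × (Fin L × (Fin d × Fin d) → ℂ) =>
      ∑ p, ‖gw q.1 q.2 p‖ ^ 2) :=
    grad_cont d L lam (lam ⟨0, hL⟩) M y ε αT αS βT βS hε κ gw hgw
  -- compact set containing the iterates
  set R : ℝ := Real.sqrt ((BlindObj d L lam (lam ⟨0, hL⟩) M y ε αT αS βT βS κ (z 0) (w 0)) / αT) + Real.sqrt ((BlindObj d L lam (lam ⟨0, hL⟩) M y ε αT αS βT βS κ (z 0) (w 0)) / βT) with hRdef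
  have hnormz : ∀ t, ‖z t‖ ≤ R := by
    intro t
    rw [pi_norm_le_iff_of_nonneg (by positivity)]
    intro p
    calc ‖z t p‖ = Real.sqrt (‖z t p‖ ^ 2) := (Real.sqrt_sq (norm_nonneg _)).symm
      _ ≤ Real.sqrt ((BlindObj d L lam (lam ⟨0, hL⟩) M y ε αT αS βT βS κ (z 0) (w 0)) / αT) := by
          apply Real.sqrt_le_sqrt
          exact le_trans (Finset.single_le_sum (f := fun q => ‖z t q‖ ^ 2)
            (fun q _ => by positivity) (Finset.mem_univ p)) (hzR t)
      _ ≤ R := by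
          rw [hRdef]
          exact le_add_of_nonneg_right (Real.sqrt_nonneg _)
  have hnormw : ∀ t, ‖w t‖ ≤ R := by
    intro t
    rw [pi_norm_le_iff_of_nonneg (by positivity)]
    intro p
    calc ‖w t p‖ = Real.sqrt (‖w t p‖ ^ 2) := (Real.sqrt_sq (norm_nonneg _)).symm
      _ ≤ Real.sqrt ((BlindObj d L lam (lam ⟨0, hL⟩) M y ε αT αS βT βS κ (z 0) (w 0)) / βT) := by
          apply Real.sqrt_le_sqrt
          exact le_trans (Finset.single_le_sum (f := fun q => ‖w t q‖ ^ 2)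
            (fun q _ => by positivity) (Finset.mem_univ p)) (hwR t)
      _ ≤ R := by
          rw [hRdef]
          exact le_add_of_nonneg_left (Real.sqrt_nonneg _)
  have hKcompact : IsCompact ((Metric.closedBall (0 : Fin L × (Fin d × Fin d) → ℂ) R) ×ˢ
      (Metric.closedBall (0 : Fin L × (Fin d × Fin d) → ℂ) R)) :=
    (isCompact_closedBall _ _).prod (isCompact_closedBall _ _)
  have hUC := hKcompact.uniformContinuousOn_of_continuous hG.continuousOn
  have hmemK : ∀ (u v : Fin L × (Fin d × Fin d) → ℂ), ‖u‖ ≤ R → ‖v‖ ≤ R →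
      (u, v) ∈ (Metric.closedBall (0 : Fin L × (Fin d × Fin d) → ℂ) R) ×ˢ
        (Metric.closedBall (0 : Fin L × (Fin d × Fin d) → ℂ) R) := by
    intro u v hu hv
    refine Set.mem_prod.mpr ⟨?_, ?_⟩ <;> rw [Metric.mem_closedBall, dist_zero_right] <;>
      assumption
  -- transfer the w-gradient convergence to the diagonal points
  have hdiffto : Filter.Tendsto
      (fun t => (∑ p, ‖gw (z t) (w t) p‖ ^ 2) - ∑ p, ‖gw (z (t+1)) (w t) p‖ ^ 2)
      Filter.atTop (nhds 0) := by
    rw [Metric.tendsto_atTop]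
    intro e he
    obtain ⟨δ', hδ'pos, hδ'⟩ := Metric.uniformContinuousOn_iff.mp hUC e he
    obtain ⟨T, hT⟩ := Metric.tendsto_atTop.mp hdisp0 δ' hδ'pos
    refine ⟨T, fun t ht => ?_⟩
    have hdistp : dist ((z t, w t) : (Fin L × (Fin d × Fin d) → ℂ) × _)
        ((z (t+1), w t)) < δ' := by
      rw [Prod.dist_eq]
      apply max_lt
      · rw [dist_comm]
        simpa using hT t ht
      · simpa [dist_self] using hδ'pos
    have h1 := hδ' (z t, w t) (hmemK _ _ (hnormz t) (hnormw t))
      (z (t+1), w t) (hmemK _ _ (hnormz (t+1)) (hnormw t)) hdistp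
    rw [Real.dist_eq] at h1
    rw [Real.dist_0_eq_abs]
    exact h1
  have hc : Filter.Tendsto (fun t => ∑ p, ‖gw (z t) (w t) p‖ ^ 2) Filter.atTop (nhds 0) := by
    have heq : (fun t => ∑ p, ‖gw (z t) (w t) p‖ ^ 2)
        = fun t => ((∑ p, ‖gw (z t) (w t) p‖ ^ 2) - ∑ p, ‖gw (z (t+1)) (w t) p‖ ^ 2)
            + ∑ p, ‖gw (z (t+1)) (w t) p‖ ^ 2 := by
      funext t; ring
    rw [heq]
    simpa using hdiffto.add hb
  simpa using ha.add hc
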